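/- arXiv:2309.17250 — 5 statements merged into one kernel-verified Lean document; each statement's English description precedes it below -/
import Mathlib

section
/- Let G be a weighted graph with bounded geometry with constant c₀, let λ > 0, and let w : V → ℝ be a positive nonconstant function satisfying Δw = λw. Then with M_n = max_{B_n(x₀)} w, one has M_{n+1}/M_n ≥ (c₀³ + λ)/c₀³ for all n ∈ ℕ; consequently liminf_{n→∞} (ln M_n)/n ≥ ln((c₀³ + λ)/c₀³) > 0. -/
open Finset

/-- Graph Laplacian: `Δf(x) = Σ_{y∼x} (w_{xy}/m_x)(f(y) − f(x))`. -/
noncomputable def lap {V : Type*} (G : SimpleGraph V) [∀ v, Fintype (G.neighborSet v)]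
    (wt : V → V → ℝ) (m : V → ℝ) (f : V → ℝ) (x : V) : ℝ :=
  ∑ y ∈ G.neighborFinset x, (wt x y / m x) * (f y - f x)

/-- Bounded geometry with constant `c₀`. -/
def BoundedGeometry {V : Type*} (G : SimpleGraph V) [∀ v, Fintype (G.neighborSet v)]
    (wt : V → V → ℝ) (m : V → ℝ) (c₀ : ℝ) : Prop :=
  0 < c₀ ∧ (∀ x y, G.Adj x y → c₀⁻¹ ≤ wt x y ∧ wt x y ≤ c₀) ∧
    (∀ x, c₀⁻¹ ≤ m x ∧ m x ≤ c₀) ∧ ∀ x, (G.degree x : ℝ) ≤ c₀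

set_option maxHeartbeats 1000000 in
/-- Growth of positive nonconstant eigenfunctions with positive eigenvalue on a graph with
bounded geometry. -/
theorem eigenfunction_exponential_growth {V : Type*} (G : SimpleGraph V)
    [∀ v, Fintype (G.neighborSet v)] [Infinite V] (hconn : G.Connected)
    (wt : V → V → ℝ) (m : V → ℝ) (hsymm : ∀ x y, wt x y = wt y x)
    (c₀ : ℝ) (hbg : BoundedGeometry G wt m c₀)
    (lam : ℝ) (hlam : 0 < lam)
    (w : V → ℝ) (hw : ∀ x, 0 < w x) (hnc : ∃ x y, w x ≠ w y)
    (heig : ∀ x, lap G wt m w x = lam * w x)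
    (x₀ : V) (M : ℕ → ℝ)
    (hM : ∀ n : ℕ, IsGreatest (w '' {x | G.dist x₀ x ≤ n}) (M n)) :
    (∀ n : ℕ, (c₀ ^ 3 + lam) / c₀ ^ 3 ≤ M (n + 1) / M n) ∧
      Real.log ((c₀ ^ 3 + lam) / c₀ ^ 3) ≤
        Filter.liminf (fun n : ℕ => Real.log (M n) / n) Filter.atTop ∧
      0 < Real.log ((c₀ ^ 3 + lam) / c₀ ^ 3) := by
  obtain ⟨hc₀, hwt, hm, hdeg⟩ := hbg
  have hc1 : 1 ≤ c₀ := by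
    have h := hm x₀
    nlinarith [inv_pos.mpr hc₀, mul_inv_cancel₀ hc₀.ne']
  have hc3 : (0:ℝ) < c₀ ^ 3 := by positivity
  have hinv : c₀ * c₀⁻¹ = 1 := mul_inv_cancel₀ hc₀.ne'
  set r : ℝ := (c₀ ^ 3 + lam) / c₀ ^ 3 with hr
  have hr1 : 1 < r := by
    rw [hr, lt_div_iff₀ hc3]; linarith
  -- M n ≥ w x₀ > 0
  have hMpos : ∀ n, 0 < M n := fun n => by
    have := (hM n).2 ⟨x₀, by simp [SimpleGraph.dist_self], rfl⟩
    exact lt_of_lt_of_le (hw x₀) this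
  -- a uniform coefficient bound and the sum identity at any point
  have hcoef : ∀ x y, G.Adj x y → c₀⁻¹ * c₀⁻¹ ≤ wt x y / m x ∧ wt x y / m x ≤ c₀ ^ 2 := by
    intro x y hy
    have hwty := hwt x y hy
    have hmx := hm x
    have hminv : 0 < m x := lt_of_lt_of_le (inv_pos.mpr hc₀) hmx.1
    constructor
    · rw [le_div_iff₀ hminv]
      nlinarith [inv_pos.mpr hc₀, hwty.1, hmx.2]
    · rw [div_le_iff₀ hminv]
      nlinarith [inv_pos.mpr hc₀, hwty.2, hmx.1]
  -- key growth inequality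
  have key : ∀ n : ℕ, r ≤ M (n + 1) / M n := by
    intro n
    obtain ⟨x, hx, hwx⟩ := (hM n).1
    simp only [Set.mem_setOf_eq] at hx
    have hMle : M n ≤ M (n + 1) := by
      refine (hM (n+1)).2 ⟨x, ?_, hwx⟩
      simp only [Set.mem_setOf_eq]
      omega
    have hub : ∀ y ∈ G.neighborFinset x, w y ≤ M (n + 1) := by
      intro y hy
      rw [SimpleGraph.mem_neighborFinset] at hy
      refine (hM (n+1)).2 ⟨y, ?_, rfl⟩
      simp only [Set.mem_setOf_eq]
      have h1 : G.dist x y = 1 := SimpleGraph.dist_eq_one_iff_adj.mpr hy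
      have := hconn.dist_triangle (u := x₀) (v := x) (w := y)
      omega
    have hterm : ∀ y ∈ G.neighborFinset x,
        (wt x y / m x) * (w y - w x) ≤ c₀ ^ 2 * (M (n+1) - w x) := by
      intro y hy
      rw [SimpleGraph.mem_neighborFinset] at hy
      obtain ⟨hcoef1, hcoef2⟩ := hcoef x y hy
      have hcoef0 : 0 ≤ wt x y / m x := by
        have : (0:ℝ) ≤ c₀⁻¹ * c₀⁻¹ := by positivity
        linarith
      have hDy : w y - w x ≤ M (n+1) - w x := by
        have := hub y (by rwa [SimpleGraph.mem_neighborFinset]); linarith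
      have hD0 : 0 ≤ M (n+1) - w x := by rw [hwx]; linarith
      nlinarith [mul_nonneg hcoef0 (sub_nonneg.mpr hDy),
        mul_nonneg (sub_nonneg.mpr hcoef2) hD0]
    have hsum : lam * M n ≤ (G.degree x : ℝ) * (c₀ ^ 2 * (M (n+1) - w x)) := by
      have h1 : lam * w x = ∑ y ∈ G.neighborFinset x, (wt x y / m x) * (w y - w x) :=
        (heig x).symm
      calc lam * M n = lam * w x := by rw [hwx]
        _ = ∑ y ∈ G.neighborFinset x, (wt x y / m x) * (w y - w x) := h1
        _ ≤ (G.neighborFinset x).card • (c₀ ^ 2 * (M (n+1) - w x)) :=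
            Finset.sum_le_card_nsmul _ _ _ hterm
        _ = (G.degree x : ℝ) * (c₀ ^ 2 * (M (n+1) - w x)) := by
            rw [nsmul_eq_mul, SimpleGraph.card_neighborFinset_eq_degree]
    have hD0 : 0 ≤ M (n+1) - w x := by rw [hwx]; linarith
    have hfin : lam * M n ≤ c₀ ^ 3 * (M (n + 1) - M n) := by
      have h2 : 0 ≤ c₀ ^ 2 * (M (n+1) - w x) := by positivity
      have h3 := mul_le_mul_of_nonneg_right (hdeg x) h2
      rw [hwx] at hsum h3
      nlinarith
    rw [hr, div_le_div_iff₀ hc3 (hMpos n)]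
    nlinarith
  refine ⟨key, ?_, Real.log_pos hr1⟩
  have hrpos : 0 < r := lt_trans one_pos hr1
  -- lower geometric bound
  have hgeom : ∀ n : ℕ, r ^ n * M 0 ≤ M n := by
    intro n
    induction n with
    | zero => simp
    | succ k ih =>
      have h1 := key k
      have h2 : r * M k ≤ M (k + 1) := by
        rw [le_div_iff₀ (hMpos k)] at h1; linarith
      calc r ^ (k+1) * M 0 = r * (r ^ k * M 0) := by ring
        _ ≤ r * M k := by nlinarith [pow_pos hrpos k, (hMpos 0)]
        _ ≤ M (k + 1) := h2
  have hlog : ∀ n : ℕ, n * Real.log r + Real.log (M 0) ≤ Real.log (M n) := by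
    intro n
    have := Real.log_le_log (mul_pos (pow_pos hrpos n) (hMpos 0)) (hgeom n)
    rwa [Real.log_mul (by positivity) (hMpos 0).ne', Real.log_pow] at this
  -- upper Harnack bound for coboundedness
  set K : ℝ := (lam + c₀ ^ 3) * c₀ ^ 2 with hKdef
  have hK1 : 1 ≤ K := by
    have h5 : (1:ℝ) ≤ c₀ ^ 5 := one_le_pow₀ hc1
    have hKe : K = lam * c₀ ^ 2 + c₀ ^ 5 := by rw [hKdef]; ring
    nlinarith [mul_pos hlam (pow_pos hc₀ 2)]
  have hKadj : ∀ x y, G.Adj x y → w y ≤ K * w x := by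
    intro x y hy
    have h1 : lam * w x = ∑ z ∈ G.neighborFinset x, (wt x z / m x) * (w z - w x) :=
      (heig x).symm
    have hsum2 : ∑ z ∈ G.neighborFinset x, (wt x z / m x) * w z
        = lam * w x + (∑ z ∈ G.neighborFinset x, (wt x z / m x)) * w x := by
      have e : ∑ z ∈ G.neighborFinset x, (wt x z / m x) * (w z - w x)
          = ∑ z ∈ G.neighborFinset x, (wt x z / m x) * w z
            - (∑ z ∈ G.neighborFinset x, (wt x z / m x)) * w x := by
        rw [Finset.sum_mul, ← Finset.sum_sub_distrib]
        exact Finset.sum_congr rfl fun z _ => by ring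
      rw [e] at h1
      linarith
    have hS : ∑ z ∈ G.neighborFinset x, (wt x z / m x) ≤ c₀ ^ 3 := by
      calc ∑ z ∈ G.neighborFinset x, (wt x z / m x)
          ≤ (G.neighborFinset x).card • (c₀ ^ 2) :=
            Finset.sum_le_card_nsmul _ _ _ fun z hz => by
              rw [SimpleGraph.mem_neighborFinset] at hz
              exact (hcoef x z hz).2
        _ = (G.degree x : ℝ) * c₀ ^ 2 := by
            rw [nsmul_eq_mul, SimpleGraph.card_neighborFinset_eq_degree]
        _ ≤ c₀ ^ 3 := by nlinarith [hdeg x, sq_nonneg c₀]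
    have hyterm : (wt x y / m x) * w y ≤ ∑ z ∈ G.neighborFinset x, (wt x z / m x) * w z := by
      refine Finset.single_le_sum (f := fun z => (wt x z / m x) * w z) ?_ ?_
      · intro z hz
        rw [SimpleGraph.mem_neighborFinset] at hz
        obtain ⟨hc1', _⟩ := hcoef x z hz
        have : (0:ℝ) ≤ c₀⁻¹ * c₀⁻¹ := by positivity
        exact mul_nonneg (by linarith) (hw z).le
      · rwa [SimpleGraph.mem_neighborFinset]
    have h2 : (wt x y / m x) * w y ≤ (lam + c₀ ^ 3) * w x := by
      have := hyterm.trans_eq hsum2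
      nlinarith [hw x, (hw x).le]
    obtain ⟨hc1', hc2'⟩ := hcoef x y hy
    have hi2 : (0:ℝ) < c₀⁻¹ * c₀⁻¹ := by positivity
    have hcoefpos : 0 < wt x y / m x := lt_of_lt_of_le hi2 hc1'
    -- w y ≤ (lam + c₀^3) * w x / (wt/m) ≤ (lam + c₀^3) * c₀^2 * w x
    have h3 : (c₀⁻¹ * c₀⁻¹) * w y ≤ (lam + c₀ ^ 3) * w x := by
      nlinarith [mul_le_mul_of_nonneg_right hc1' (hw y).le]
    have h4 : c₀ ^ 2 * ((c₀⁻¹ * c₀⁻¹) * w y) ≤ c₀ ^ 2 * ((lam + c₀ ^ 3) * w x) :=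
      mul_le_mul_of_nonneg_left h3 (by positivity)
    have h5 : c₀ ^ 2 * ((c₀⁻¹ * c₀⁻¹) * w y) = w y := by
      field_simp
    have h6 : (lam + c₀ ^ 3) * c₀ ^ 2 * w x = c₀ ^ 2 * ((lam + c₀ ^ 3) * w x) := by ring
    rw [hKdef, h6, ← h5]
    exact h4
  have hwalk : ∀ {a b : V} (p : G.Walk a b), w b ≤ K ^ p.length * w a := by
    intro a b p
    induction p with
    | nil => simp
    | @cons u v b h q ih =>
      have h1 : w v ≤ K * w u := hKadj u v h
      have hKp : (0:ℝ) ≤ K ^ q.length := by positivity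
      calc w b ≤ K ^ q.length * w v := ih
        _ ≤ K ^ q.length * (K * w u) := by nlinarith
        _ = K ^ (SimpleGraph.Walk.cons h q).length * w u := by
            rw [SimpleGraph.Walk.length_cons]; ring
  have hMup : ∀ n : ℕ, M n ≤ K ^ n * w x₀ := by
    intro n
    obtain ⟨x, hx, hwx⟩ := (hM n).1
    simp only [Set.mem_setOf_eq] at hx
    obtain ⟨p, hp⟩ := hconn.exists_walk_length_eq_dist x₀ x
    have := hwalk p
    rw [hp] at this
    have hmono : K ^ G.dist x₀ x ≤ K ^ n := pow_le_pow_right₀ hK1 hx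
    calc M n = w x := hwx.symm
      _ ≤ K ^ G.dist x₀ x * w x₀ := this
      _ ≤ K ^ n * w x₀ := by nlinarith [hw x₀]
  -- compare liminf with g n = log r + log M 0 / n
  set g : ℕ → ℝ := fun n => Real.log r + Real.log (M 0) / n with hg
  have hgt : Filter.Tendsto g Filter.atTop (nhds (Real.log r)) := by
    have : Filter.Tendsto (fun n : ℕ => Real.log (M 0) / n) Filter.atTop (nhds 0) :=
      Filter.Tendsto.div_atTop tendsto_const_nhds tendsto_natCast_atTop_atTop
    simpa using Filter.Tendsto.const_add (Real.log r) this
  have hev : ∀ᶠ n : ℕ in Filter.atTop, g n ≤ Real.log (M n) / n := by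
    filter_upwards [Filter.eventually_ge_atTop 1] with n hn
    have hn0 : (0:ℝ) < n := by exact_mod_cast hn
    show Real.log r + Real.log (M 0) / n ≤ Real.log (M n) / n
    rw [le_div_iff₀ hn0]
    have h1 := hlog n
    have h2 : (Real.log r + Real.log (M 0) / n) * n = n * Real.log r + Real.log (M 0) := by
      field_simp
    rw [h2]; exact h1
  have hbd : Filter.IsBoundedUnder (· ≥ ·) Filter.atTop g := hgt.isBoundedUnder_ge
  have hcb : Filter.IsCoboundedUnder (· ≥ ·) Filter.atTop
      (fun n : ℕ => Real.log (M n) / n) := by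
    refine Filter.isCoboundedUnder_ge_of_eventually_le Filter.atTop
      (x := Real.log K + |Real.log (w x₀)|) ?_
    filter_upwards [Filter.eventually_ge_atTop 1] with n hn
    have hn0 : (0:ℝ) < n := by exact_mod_cast hn
    have hKpos : (0:ℝ) < K := lt_of_lt_of_le one_pos hK1
    have h1 : Real.log (M n) ≤ n * Real.log K + Real.log (w x₀) := by
      have := Real.log_le_log (hMpos n) (hMup n)
      rwa [Real.log_mul (by positivity) (hw x₀).ne', Real.log_pow] at this
    rw [div_le_iff₀ hn0]
    have habs : Real.log (w x₀) ≤ |Real.log (w x₀)| := le_abs_self _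
    have habs0 : 0 ≤ |Real.log (w x₀)| := abs_nonneg _
    have hn1 : (1:ℝ) ≤ n := by exact_mod_cast hn
    have h2 : |Real.log (w x₀)| ≤ (n:ℝ) * |Real.log (w x₀)| :=
      le_mul_of_one_le_left habs0 hn1
    calc Real.log (M n) ≤ n * Real.log K + Real.log (w x₀) := h1
      _ ≤ n * Real.log K + (n:ℝ) * |Real.log (w x₀)| := by linarith
      _ = (Real.log K + |Real.log (w x₀)|) * n := by ring
  calc Real.log r = Filter.liminf g Filter.atTop := (hgt.liminf_eq).symm
    _ ≤ Filter.liminf (fun n : ℕ => Real.log (M n) / n) Filter.atTop :=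
        Filter.liminf_le_liminf hev hbd hcb
end

section
/- Let G be a weighted graph with bounded geometry with constant c₀, λ > 0, and let w be a positive function with Δw = λw, attaining its maximum M_n over B_n(x₀) at some x_n ∈ ∂B_n(x₀). Then λ·w(x_n) ≤ c₀³·(M_{n+1} − M_n), where M_{n+1} = max_{B_{n+1}(x₀)} w. -/
open Finset

/-- Key estimate: if a positive eigenfunction attains its max over the ball of radius `n`
at a point of the sphere, then the eigenvalue times that max is controlled by the increment
of the maxima. -/
theorem eigenfunction_max_increment {V : Type*} (G : SimpleGraph V)
    [∀ v, Fintype (G.neighborSet v)] [Infinite V] (hconn : G.Connected)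
    (wt : V → V → ℝ) (m : V → ℝ) (hsymm : ∀ x y, wt x y = wt y x)
    (c₀ : ℝ) (hbg : BoundedGeometry G wt m c₀)
    (lam : ℝ) (hlam : 0 < lam)
    (w : V → ℝ) (hw : ∀ x, 0 < w x)
    (heig : ∀ x, lap G wt m w x = lam * w x)
    (x₀ : V) (n : ℕ) (xn : V) (hxn : G.dist x₀ xn = n)
    (hmax : IsGreatest (w '' {x | G.dist x₀ x ≤ n}) (w xn))
    (Mn1 : ℝ) (hMn1 : IsGreatest (w '' {x | G.dist x₀ x ≤ n + 1}) Mn1) :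
    lam * w xn ≤ c₀ ^ 3 * (Mn1 - w xn) := by
  obtain ⟨hc₀, hwt, hm, hdeg⟩ := hbg
  have hxnball : w xn ≤ Mn1 := hMn1.2 ⟨xn, by simp [hxn], rfl⟩
  have hgap : (0:ℝ) ≤ Mn1 - w xn := sub_nonneg.2 hxnball
  have hb : (0:ℝ) ≤ c₀ ^ 2 * (Mn1 - w xn) := mul_nonneg (by positivity) hgap
  have hterm : ∀ y ∈ G.neighborFinset xn,
      (wt xn y / m xn) * (w y - w xn) ≤ c₀ ^ 2 * (Mn1 - w xn) := by
    intro y hy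
    have hadj : G.Adj xn y := by rwa [SimpleGraph.mem_neighborFinset] at hy
    have hm0 : (0:ℝ) < m xn := lt_of_lt_of_le (inv_pos.2 hc₀) (hm xn).1
    have hwt0 : (0:ℝ) ≤ wt xn y := le_trans (inv_pos.2 hc₀).le (hwt _ _ hadj).1
    have hratio : wt xn y / m xn ≤ c₀ ^ 2 := by
      calc wt xn y / m xn ≤ c₀ / c₀⁻¹ :=
            div_le_div₀ hc₀.le (hwt _ _ hadj).2 (inv_pos.2 hc₀) (hm xn).1
        _ = c₀ ^ 2 := by field_simp
    rcases le_or_gt (w y) (w xn) with h | h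
    · exact le_trans (mul_nonpos_of_nonneg_of_nonpos
        (div_nonneg hwt0 hm0.le) (sub_nonpos.2 h)) hb
    · have hdisty : G.dist x₀ y ≤ n + 1 := by
        have := hconn.dist_triangle (u := x₀) (v := xn) (w := y)
        rw [hxn, (SimpleGraph.dist_eq_one_iff_adj).2 hadj] at this
        exact this
      have hwy : w y ≤ Mn1 := hMn1.2 ⟨y, hdisty, rfl⟩
      exact mul_le_mul hratio (sub_le_sub_right hwy _) (sub_nonneg.2 h.le)
        (by positivity)
  have hsum : lap G wt m w xn ≤ (G.degree xn : ℝ) * (c₀ ^ 2 * (Mn1 - w xn)) := by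
    calc lap G wt m w xn
        ≤ (G.neighborFinset xn).card • (c₀ ^ 2 * (Mn1 - w xn)) :=
          Finset.sum_le_card_nsmul _ _ _ hterm
      _ = (G.degree xn : ℝ) * (c₀ ^ 2 * (Mn1 - w xn)) := by
          rw [nsmul_eq_mul, SimpleGraph.card_neighborFinset_eq_degree]
  calc lam * w xn = lap G wt m w xn := (heig xn).symm
    _ ≤ (G.degree xn : ℝ) * (c₀ ^ 2 * (Mn1 - w xn)) := hsum
    _ ≤ c₀ * (c₀ ^ 2 * (Mn1 - w xn)) := mul_le_mul_of_nonneg_right (hdeg xn) hb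
    _ = c₀ ^ 3 * (Mn1 - w xn) := by ring
end

section
/- Let u be a nonnegative solution on V × ℝ of the heat equation on a graph with bounded geometry satisfying the local Harnack inequality u(x, t−a) ≤ e^{C₁ a} u(x, t) for all a > 0 (with C₁ > 0 the Harnack constant). If u generates an extreme ray of the cone C of nonnegative ancient solutions — i.e. whenever v ∈ C and u − v ∈ C then v = k·u for some k ≥ 0 — and u ≢ 0, then there exist λ ∈ ℝ and a nonnegative function w : V → ℝ with Δw = λw such that u(x, t) = e^{λ t} w(x). -/
open Finset

/-- `u` is a nonnegative ancient solution of the heat equation on `V × (−∞, t₀)`. -/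
def IsAncientSol {V : Type*} (G : SimpleGraph V) [∀ v, Fintype (G.neighborSet v)]
    (wt : V → V → ℝ) (m : V → ℝ) (t₀ : ℝ) (u : V → ℝ → ℝ) : Prop :=
  ∀ x t, t < t₀ → HasDerivAt (u x) (lap G wt m (fun y => u y t) x) t ∧ 0 ≤ u x t

/-- `lap` of a pointwise scalar multiple. -/
lemma lap_const_mul {V : Type*} (G : SimpleGraph V) [∀ v, Fintype (G.neighborSet v)]
    (wt : V → V → ℝ) (m : V → ℝ) (c : ℝ) (f : V → ℝ) (x : V) :
    lap G wt m (fun y => c * f y) x = c * lap G wt m f x := by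
  unfold lap
  rw [Finset.mul_sum]
  exact Finset.sum_congr rfl fun y _ => by ring

/-- `lap` depends only on pointwise values. -/
lemma lap_congr {V : Type*} (G : SimpleGraph V) [∀ v, Fintype (G.neighborSet v)]
    (wt : V → V → ℝ) (m : V → ℝ) (f g : V → ℝ) (h : ∀ y, f y = g y) (x : V) :
    lap G wt m f x = lap G wt m g x := by
  unfold lap
  exact Finset.sum_congr rfl fun y _ => by rw [h y, h x]

/-- A nonzero element generating an extreme ray of the cone of nonnegative ancient
solutions has the separated form `u(x,t) = e^{λt} w(x)` with `Δw = λw`, `w ≥ 0`. -/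
theorem extreme_ray_separated {V : Type*} (G : SimpleGraph V)
    [∀ v, Fintype (G.neighborSet v)] (hconn : G.Connected)
    (wt : V → V → ℝ) (m : V → ℝ) (hsymm : ∀ x y, wt x y = wt y x)
    (c₀ : ℝ) (hbg : BoundedGeometry G wt m c₀)
    (t₀ : ℝ) (u : V → ℝ → ℝ) (hu : IsAncientSol G wt m t₀ u)
    (C₁ : ℝ) (hC₁ : 0 < C₁)
    (hHarnack : ∀ x t a, t < t₀ → 0 < a → u x (t - a) ≤ Real.exp (C₁ * a) * u x t)
    (hext : ∀ v : V → ℝ → ℝ, IsAncientSol G wt m t₀ v →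
      IsAncientSol G wt m t₀ (fun x t => u x t - v x t) →
      ∃ k : ℝ, 0 ≤ k ∧ ∀ x t, t < t₀ → v x t = k * u x t)
    (hne : ∃ x t, t < t₀ ∧ u x t ≠ 0) :
    ∃ (lam : ℝ) (w : V → ℝ), (∀ x, 0 ≤ w x) ∧ (∀ x, lap G wt m w x = lam * w x) ∧
      ∀ x t, t < t₀ → u x t = Real.exp (lam * t) * w x := by
  obtain ⟨x₁, t₁, ht₁, hne₁⟩ := hne
  have hu₁pos : 0 < u x₁ t₁ := lt_of_le_of_ne (hu x₁ t₁ ht₁).2 (Ne.symm hne₁)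
  -- Step 1: for each a > 0, there is g ≥ 0 with u x (t-a) = g * u x t.
  have key : ∀ a : ℝ, ∃ g : ℝ, 0 ≤ g ∧ (0 < a → ∀ x t, t < t₀ → u x (t - a) = g * u x t) := by
    intro a
    rcases le_or_gt a 0 with ha | ha
    · exact ⟨0, le_refl 0, fun h => absurd h (not_lt.2 ha)⟩
    · set c := Real.exp (-(C₁ * a)) with hc
      have hcpos : 0 < c := Real.exp_pos _
      have hd : ∀ x t, t < t₀ →
          HasDerivAt (fun s => c * u x (s - a))
            (lap G wt m (fun y => c * u y (t - a)) x) t := by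
        intro x t ht
        have h1 := (hu x (t - a) (by linarith)).1
        have h2 : HasDerivAt (fun s => u x (s - a))
            (lap G wt m (fun y => u y (t - a)) x) t := by
          have := h1.comp t (((hasDerivAt_id t).sub_const a))
          simpa [Function.comp_def] using this
        rw [lap_const_mul]
        exact h2.const_mul c
      have hva : IsAncientSol G wt m t₀ (fun x t => c * u x (t - a)) := by
        intro x t ht
        refine ⟨hd x t ht, ?_⟩
        exact mul_nonneg hcpos.le (hu x (t - a) (by linarith)).2
      have hwa : IsAncientSol G wt m t₀ (fun x t => u x t - c * u x (t - a)) := by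
        intro x t ht
        constructor
        · have := ((hu x t ht).1).sub (hd x t ht)
          have heq : lap G wt m (fun y => u y t) x - lap G wt m (fun y => c * u y (t - a)) x
              = lap G wt m (fun y => u y t - c * u y (t - a)) x := by
            unfold lap
            rw [← Finset.sum_sub_distrib]
            exact Finset.sum_congr rfl fun y _ => by ring
          rwa [heq] at this
        · have hH := hHarnack x t a ht ha
          have : c * u x (t - a) ≤ c * (Real.exp (C₁ * a) * u x t) :=
            mul_le_mul_of_nonneg_left hH hcpos.le
          have hce : c * Real.exp (C₁ * a) = 1 := by
            rw [hc, ← Real.exp_add]; simp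
          have h2 : c * (Real.exp (C₁ * a) * u x t) = u x t := by
            rw [← mul_assoc, hce, one_mul]
          show 0 ≤ u x t - c * u x (t - a)
          linarith
      obtain ⟨k, hk0, hkeq⟩ := hext _ hva hwa
      refine ⟨k * Real.exp (C₁ * a), mul_nonneg hk0 (Real.exp_pos _).le, fun _ x t ht => ?_⟩
      have := hkeq x t ht
      have hce : Real.exp (C₁ * a) * c = 1 := by
        rw [hc, ← Real.exp_add]; simp
      calc u x (t - a) = Real.exp (C₁ * a) * c * u x (t - a) := by rw [hce]; ring
        _ = Real.exp (C₁ * a) * (c * u x (t - a)) := by ring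
        _ = Real.exp (C₁ * a) * (k * u x t) := by rw [this]
        _ = k * Real.exp (C₁ * a) * u x t := by ring
  choose g hg0 hg using key
  -- multiplicativity
  have hmul : ∀ a b : ℝ, 0 < a → 0 < b → g (a + b) = g a * g b := by
    intro a b ha hb
    have h1 : u x₁ (t₁ - (a + b)) = g (a + b) * u x₁ t₁ := hg (a + b) (by linarith) x₁ t₁ ht₁
    have h2 : u x₁ ((t₁ - b) - a) = g a * u x₁ (t₁ - b) := hg a ha x₁ (t₁ - b) (by linarith)
    have h3 : u x₁ (t₁ - b) = g b * u x₁ t₁ := hg b hb x₁ t₁ ht₁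
    have he : t₁ - (a + b) = (t₁ - b) - a := by ring
    rw [he, h2, h3] at h1
    have := mul_right_cancel₀ hne₁ (by linarith [h1] : g a * g b * u x₁ t₁ = g (a + b) * u x₁ t₁)
    linarith [this]
  -- g is positive
  have hgsmall : ∀ a : ℝ, 0 < a → a < t₀ - t₁ → g a ≠ 0 := by
    intro a ha ha' hga
    have := hg a ha x₁ (t₁ + a) (by linarith)
    simp [hga] at this
    exact hne₁ this
  have hghalf : ∀ a : ℝ, 0 < a → g a = 0 → g (a / 2) = 0 := by
    intro a ha hga
    have : g a = g (a / 2) * g (a / 2) := by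
      have := hmul (a / 2) (a / 2) (by linarith) (by linarith)
      rw [← this]; norm_num
    rw [this] at hga
    exact mul_self_eq_zero.mp hga
  have hgpos : ∀ a : ℝ, 0 < a → 0 < g a := by
    intro a ha
    rcases (hg0 a).lt_or_eq with h | h
    · exact h
    · exfalso
      have hiter : ∀ n : ℕ, g (a / 2 ^ n) = 0 := by
        intro n
        induction n with
        | zero => simpa using h.symm
        | succ n ih =>
          have : a / 2 ^ (n + 1) = (a / 2 ^ n) / 2 := by ring
          rw [this]
          exact hghalf _ (by positivity) ih
      obtain ⟨n, hn⟩ := pow_unbounded_of_one_lt (a / (t₀ - t₁)) (one_lt_two (α := ℝ))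
      have ht₀t₁ : 0 < t₀ - t₁ := by linarith
      have hlt : a / 2 ^ n < t₀ - t₁ := by
        rw [div_lt_iff₀ (by positivity)]
        rw [div_lt_iff₀ ht₀t₁] at hn
        linarith [hn]
      exact hgsmall (a / 2 ^ n) (by positivity) hlt (hiter n)
  -- positivity of t ↦ u x₁ t
  have hφpos : ∀ t, t < t₀ → 0 < u x₁ t := by
    intro t ht
    rcases lt_trichotomy t t₁ with h | h | h
    · have h1 := hg (t₁ - t) (by linarith) x₁ t₁ ht₁
      have he : t₁ - (t₁ - t) = t := by ring
      rw [he] at h1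
      rw [h1]
      exact mul_pos (hgpos _ (by linarith)) hu₁pos
    · rw [h]; exact hu₁pos
    · have h1 := hg (t - t₁) (by linarith) x₁ t (by linarith)
      have he : t - (t - t₁) = t₁ := by ring
      rw [he] at h1
      rcases (hu x₁ t ht).2.lt_or_eq with h' | h'
      · exact h'
      · exfalso; rw [← h'] at h1; simp at h1; exact hne₁ h1
  -- separation: u x t * u x₁ t₁ = u x t₁ * u x₁ t
  have hsep : ∀ x t, t < t₀ → u x t * u x₁ t₁ = u x t₁ * u x₁ t := by
    intro x t ht
    rcases lt_trichotomy t t₁ with h | h | h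
    · have h1 := hg (t₁ - t) (by linarith) x t₁ ht₁
      have h2 := hg (t₁ - t) (by linarith) x₁ t₁ ht₁
      have he : t₁ - (t₁ - t) = t := by ring
      rw [he] at h1 h2
      rw [h1, h2]; ring
    · rw [h]
    · have h1 := hg (t - t₁) (by linarith) x t ht
      have h2 := hg (t - t₁) (by linarith) x₁ t ht
      have he : t - (t - t₁) = t₁ := by ring
      rw [he] at h1 h2
      rw [h1, h2]; ring
  have hφ₁pos : 0 < u x₁ t₁ := hu₁pos
  set w₀ : V → ℝ := fun x => u x t₁ / u x₁ t₁ with hw₀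
  have hw₀φ : ∀ x, w₀ x * u x₁ t₁ = u x t₁ := by
    intro x
    rw [hw₀]
    field_simp
  have husep : ∀ x t, t < t₀ → u x t = w₀ x * u x₁ t := by
    intro x t ht
    rw [hw₀]
    field_simp
    linarith [hsep x t ht]
  -- lap of time-slices
  have hlapslice : ∀ x t, t < t₀ →
      lap G wt m (fun y => u y t) x = u x₁ t * lap G wt m w₀ x := by
    intro x t ht
    rw [lap_congr G wt m (fun y => u y t) (fun y => u x₁ t * w₀ y)
      (fun y => by show u y t = u x₁ t * w₀ y; rw [husep y t ht]; ring) x, lap_const_mul]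
  set lam : ℝ := lap G wt m w₀ x₁ with hlam
  -- the ODE (u x₁)' = lam * u x₁
  have hφode : ∀ t, t < t₀ → HasDerivAt (u x₁) (lam * u x₁ t) t := by
    intro t ht
    have h1 := (hu x₁ t ht).1
    rw [hlapslice x₁ t ht] at h1
    convert h1 using 1
    rw [hlam]; ring
  -- eigenvalue equation for w₀
  have hlapw₀ : ∀ x, lap G wt m w₀ x = lam * w₀ x := by
    intro x
    have h1 := (hu x t₁ ht₁).1
    have h2 : HasDerivAt (u x) (w₀ x * (lam * u x₁ t₁)) t₁ := by
      have hd : HasDerivAt (fun t => w₀ x * u x₁ t) (w₀ x * (lam * u x₁ t₁)) t₁ :=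
        (hφode t₁ ht₁).const_mul (w₀ x)
      apply hd.congr_of_eventuallyEq
      filter_upwards [Iio_mem_nhds ht₁] with s hs
      exact husep x s hs
    have huniq := h1.unique h2
    rw [hlapslice x t₁ ht₁] at huniq
    have h3 : u x₁ t₁ * lap G wt m w₀ x = u x₁ t₁ * (lam * w₀ x) := by linarith
    exact mul_left_cancel₀ (ne_of_gt hφ₁pos) h3
  -- solve the ODE
  have hψderiv : ∀ t, t < t₀ →
      HasDerivAt (fun s => u x₁ s * Real.exp (-(lam * s))) 0 t := by
    intro t ht
    have he : HasDerivAt (fun s : ℝ => Real.exp (-(lam * s)))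
        (-lam * Real.exp (-(lam * t))) t := by
      have h0 : HasDerivAt (fun s : ℝ => -(lam * s)) (-lam) t := by
        simpa using ((hasDerivAt_id t).const_mul (-lam))
      simpa [mul_comm] using h0.exp
    have : HasDerivAt (fun s => u x₁ s * Real.exp (-(lam * s)))
        (lam * u x₁ t * Real.exp (-(lam * t)) + u x₁ t * (-lam * Real.exp (-(lam * t)))) t :=
      (hφode t ht).mul he
    convert this using 1
    ring
  have hψconst : ∀ s r : ℝ, s ≤ r → r < t₀ →
      u x₁ r * Real.exp (-(lam * r)) = u x₁ s * Real.exp (-(lam * s)) := by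
    intro s r hsr hr
    have := constant_of_has_deriv_right_zero
      (f := fun s => u x₁ s * Real.exp (-(lam * s))) (a := s) (b := r)
      (fun x hx => ((hψderiv x (lt_of_le_of_lt hx.2 hr)).continuousAt).continuousWithinAt)
      (fun x hx => (hψderiv x (hx.2.trans hr)).hasDerivWithinAt)
    exact this r ⟨hsr, le_refl r⟩
  have hψeq : ∀ t, t < t₀ →
      u x₁ t * Real.exp (-(lam * t)) = u x₁ t₁ * Real.exp (-(lam * t₁)) := by
    intro t ht
    rcases le_total t t₁ with h | h
    · exact (hψconst t t₁ h ht₁).symm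
    · exact hψconst t₁ t h ht
  have hφsol : ∀ t, t < t₀ → u x₁ t = u x₁ t₁ * Real.exp (lam * (t - t₁)) := by
    intro t ht
    have h := hψeq t ht
    have h2 := congrArg (· * Real.exp (lam * t)) h
    rw [mul_assoc, ← Real.exp_add, neg_add_cancel, Real.exp_zero, mul_one] at h2
    rw [h2, mul_assoc, ← Real.exp_add]
    ring_nf
  -- conclusion
  refine ⟨lam, fun x => u x t₁ * Real.exp (-(lam * t₁)), ?_, ?_, ?_⟩
  · intro x
    exact mul_nonneg (hu x t₁ ht₁).2 (Real.exp_pos _).le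
  · intro x
    show lap G wt m (fun y => u y t₁ * Real.exp (-(lam * t₁))) x
        = lam * (u x t₁ * Real.exp (-(lam * t₁)))
    have h0 : lap G wt m (fun y => u y t₁ * Real.exp (-(lam * t₁))) x
        = Real.exp (-(lam * t₁)) * lap G wt m (fun y => u y t₁) x := by
      rw [← lap_const_mul]
      exact lap_congr G wt m _ _
        (fun y => by show u y t₁ * _ = _ * u y t₁; ring) x
    rw [h0, hlapslice x t₁ ht₁, hlapw₀ x, ← hw₀φ x]
    ring
  · intro x t ht
    show u x t = Real.exp (lam * t) * (u x t₁ * Real.exp (-(lam * t₁)))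
    rw [husep x t ht, hφsol t ht, ← hw₀φ x,
      show lam * (t - t₁) = lam * t + -(lam * t₁) by ring, Real.exp_add]
    ring
end

section
/- On an infinite, locally finite, connected weighted graph G, the set Λ = {λ ∈ ℝ : the equation Δw = λw has a nonzero nonnegative solution on G} equals the closed half-line [−λ₁(G), +∞), where λ₁(G) is the bottom of the spectrum of the (negative of the) graph Laplacian. -/
open Finset

/-- On an infinite, locally finite, connected weighted graph, the set of `λ` for which
`Δw = λw` admits a nonzero nonnegative solution equals `[−λ₁(G), ∞)`, where `λ₁(G)` is the
bottom of the spectrum of `−Δ` (characterized by the Agmon–Allegretto–Piepenbrink theorem). -/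
theorem eigenvalue_set_eq_Ici {V : Type*} (G : SimpleGraph V)
    [∀ v, Fintype (G.neighborSet v)] [Infinite V] (hconn : G.Connected)
    (wt : V → V → ℝ) (m : V → ℝ) (hsymm : ∀ x y, wt x y = wt y x)
    (hwt : ∀ x y, G.Adj x y → 0 < wt x y) (hm : ∀ x, 0 < m x)
    (lam1 : ℝ)
    (hAAP : ∀ lam : ℝ, -lam1 ≤ lam ↔
      ∃ w : V → ℝ, (∀ x, 0 < w x) ∧ ∀ x, lap G wt m w x = lam * w x) :
    {lam : ℝ | ∃ w : V → ℝ, (∃ x, w x ≠ 0) ∧ (∀ x, 0 ≤ w x) ∧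
      ∀ x, lap G wt m w x = lam * w x} = Set.Ici (-lam1) := by
  ext lam
  simp only [Set.mem_setOf_eq, Set.mem_Ici]
  constructor
  · rintro ⟨w, ⟨x₀, hx₀⟩, hnn, heq⟩
    rw [hAAP]
    refine ⟨w, ?_, heq⟩
    by_contra h
    push_neg at h
    obtain ⟨z, hz⟩ := h
    have hz0 : w z = 0 := le_antisymm hz (hnn z)
    have key : ∀ x, w x = 0 → ∀ y, G.Adj x y → w y = 0 := by
      intro x hx y hxy
      have h1 : lap G wt m w x = 0 := by rw [heq, hx, mul_zero]
      have h2 : ∀ u ∈ G.neighborFinset x, 0 ≤ (wt x u / m x) * (w u - w x) := by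
        intro u hu
        rw [SimpleGraph.mem_neighborFinset] at hu
        have h3 := hwt x u hu
        have h4 := hm x
        have h5 := hnn u
        rw [hx, sub_zero]
        positivity
      have h6 := (Finset.sum_eq_zero_iff_of_nonneg h2).mp h1 y
        (by rwa [SimpleGraph.mem_neighborFinset])
      rw [hx, sub_zero] at h6
      rcases mul_eq_zero.mp h6 with h7 | h7
      · exact absurd h7 (ne_of_gt (div_pos (hwt x y hxy) (hm x)))
      · exact h7
    have step : ∀ {a b : V}, G.Walk a b → w a = 0 → w b = 0 := by
      intro a b p
      induction p with
      | nil => exact id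
      | cons h p ih => intro ha; exact ih (key _ ha _ h)
    exact absurd (step ((hconn z x₀).some) hz0) hx₀
  · intro hlam
    obtain ⟨w, hw, heq⟩ := (hAAP lam).mp hlam
    exact ⟨w, ⟨Classical.arbitrary V, (hw _).ne'⟩, fun x => (hw x).le, heq⟩
end

section
/- Let G be a graph with bounded geometry and suppose the local Harnack inequality holds: u(x, t₁) ≤ u(y, t₂) exp(C₁(t₂−t₁) + C₂ρ²(x,y)/(t₂−t₁)) for nonnegative heat solutions. Then a sequence of nonnegative ancient heat solutions u_n converging pointwise on a dense subset D of V × (−∞, t₀) converges pointwise on all of V × (−∞, t₀), and the limit is again a nonnegative ancient solution of the heat equation. -/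
open Finset
open Filter

/-- Under the local Harnack inequality, pointwise convergence of nonnegative ancient heat
solutions on a dense subset of `V × (−∞, t₀)` implies pointwise convergence everywhere, and
the limit is again a nonnegative ancient solution. -/
theorem ancient_solutions_weakly_complete {V : Type*} (G : SimpleGraph V)
    [∀ v, Fintype (G.neighborSet v)] (hconn : G.Connected)
    (wt : V → V → ℝ) (m : V → ℝ) (hsymm : ∀ x y, wt x y = wt y x)
    (c₀ : ℝ) (hbg : BoundedGeometry G wt m c₀)
    (C₁ C₂ : ℝ) (hC₁ : 0 < C₁) (hC₂ : 0 < C₂) (t₀ : ℝ)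
    (hHarnack : ∀ v : V → ℝ → ℝ, IsAncientSol G wt m t₀ v →
      ∀ x y t₁ t₂, t₁ < t₂ → t₂ < t₀ →
        v x t₁ ≤ v y t₂ * Real.exp (C₁ * (t₂ - t₁) + C₂ * (G.dist x y : ℝ) ^ 2 / (t₂ - t₁)))
    (D : Set (V × ℝ)) (hD : ∀ (x : V) (t : ℝ), t < t₀ → ∀ ε : ℝ, 0 < ε →
      ∃ s : ℝ, (x, s) ∈ D ∧ s < t₀ ∧ |s - t| < ε)
    (u : ℕ → V → ℝ → ℝ) (hu : ∀ n, IsAncientSol G wt m t₀ (u n))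
    (hconv : ∀ p ∈ D, ∃ l : ℝ, Filter.Tendsto (fun n => u n p.1 p.2) Filter.atTop (nhds l)) :
    ∃ uLim : V → ℝ → ℝ, IsAncientSol G wt m t₀ uLim ∧
      ∀ x t, t < t₀ → Filter.Tendsto (fun n => u n x t) Filter.atTop (nhds (uLim x t)) := by
  -- Step 0: same-vertex Harnack (monotonicity-type bound)
  have hmono : ∀ n (x : V) (t₁ t₂ : ℝ), t₁ < t₂ → t₂ < t₀ →
      u n x t₁ ≤ u n x t₂ * Real.exp (C₁ * (t₂ - t₁)) := by
    intro n x t₁ t₂ h1 h2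
    have h := hHarnack (u n) (hu n) x x t₁ t₂ h1 h2
    simpa [SimpleGraph.dist_self] using h
  -- Step 1: density point above any level b < t₀
  have hDpt : ∀ (x : V) (b : ℝ), b < t₀ → ∃ s, (x, s) ∈ D ∧ b < s ∧ s < t₀ := by
    intro x b hb
    obtain ⟨s, hsD, hst, hnear⟩ := hD x ((b + t₀) / 2) (by linarith) ((t₀ - b) / 4) (by linarith)
    rw [abs_lt] at hnear
    exact ⟨s, hsD, by linarith [hnear.1], hst⟩
  -- Step 2: uniform (in n) bounds on compact time intervals
  have hbound : ∀ (x : V) (a b : ℝ), b < t₀ → ∃ M : ℝ, 0 ≤ M ∧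
      ∀ n τ, a ≤ τ → τ ≤ b → u n x τ ≤ M := by
    intro x a b hb
    obtain ⟨s, hsD, hbs, hst⟩ := hDpt x b hb
    obtain ⟨l, hl⟩ := hconv (x, s) hsD
    obtain ⟨M₀, hM₀⟩ := hl.bddAbove_range
    have hM₀' : ∀ n, u n x s ≤ M₀ := fun n => hM₀ ⟨n, rfl⟩
    refine ⟨max M₀ 0 * Real.exp (C₁ * (s - a)), mul_nonneg (le_max_right _ _) (Real.exp_pos _).le, ?_⟩
    intro n τ ha hτb
    have hτs : τ < s := lt_of_le_of_lt hτb hbs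
    have h1 := hmono n x τ s hτs hst
    have h2 : u n x s ≤ max M₀ 0 := le_trans (hM₀' n) (le_max_left _ _)
    have h3 : Real.exp (C₁ * (s - τ)) ≤ Real.exp (C₁ * (s - a)) := by
      apply Real.exp_le_exp.2; nlinarith
    calc u n x τ ≤ u n x s * Real.exp (C₁ * (s - τ)) := h1
      _ ≤ max M₀ 0 * Real.exp (C₁ * (s - a)) := by
          apply mul_le_mul h2 h3 (le_of_lt (Real.exp_pos _)) (le_max_right _ _)
  -- Step 3: uniform bound on the Laplacian on compact time intervals
  have hlip : ∀ (x : V) (a b : ℝ), b < t₀ → ∃ L : ℝ, 0 ≤ L ∧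
      ∀ n τ, a ≤ τ → τ ≤ b → |lap G wt m (fun y => u n y τ) x| ≤ L := by
    intro x a b hb
    choose M hM0 hM using fun y : V => hbound y a b hb
    refine ⟨∑ y ∈ G.neighborFinset x, |wt x y / m x| * (M y + M x), ?_, ?_⟩
    · exact Finset.sum_nonneg fun y _ => mul_nonneg (abs_nonneg _) (by linarith [hM0 y, hM0 x])
    · intro n τ ha hτb
      have hτt₀ : τ < t₀ := lt_of_le_of_lt hτb hb
      unfold lap
      refine le_trans (Finset.abs_sum_le_sum_abs _ _) (Finset.sum_le_sum ?_)
      intro y _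
      rw [abs_mul]
      apply mul_le_mul_of_nonneg_left _ (abs_nonneg _)
      have h0y : 0 ≤ u n y τ := (hu n y τ hτt₀).2
      have h0x : 0 ≤ u n x τ := (hu n x τ hτt₀).2
      have hy := hM y n τ ha hτb
      have hx := hM x n τ ha hτb
      rw [abs_sub_le_iff]; constructor <;> linarith
  -- Step 4: uniform (in n) Lipschitz bounds in time
  have hlipfun : ∀ (x : V) (a b : ℝ), b < t₀ → ∃ L : ℝ, 0 ≤ L ∧
      ∀ n τ τ', τ ∈ Set.Icc a b → τ' ∈ Set.Icc a b →
        |u n x τ - u n x τ'| ≤ L * |τ - τ'| := by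
    intro x a b hb
    obtain ⟨L, hL0, hL⟩ := hlip x a b hb
    refine ⟨L, hL0, ?_⟩
    intro n τ τ' hτ hτ'
    have := Convex.norm_image_sub_le_of_norm_hasDerivWithin_le
      (f := u n x) (f' := fun σ => lap G wt m (fun y => u n y σ) x)
      (s := Set.Icc a b) (C := L)
      (fun σ hσ => ((hu n x σ (lt_of_le_of_lt hσ.2 hb)).1).hasDerivWithinAt)
      (fun σ hσ => by simpa [Real.norm_eq_abs] using hL n σ hσ.1 hσ.2)
      (convex_Icc a b) hτ' hτ
    simpa [Real.norm_eq_abs] using this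

  -- Step 5: Cauchy everywhere
  have hcauchy : ∀ (x : V) (t : ℝ), t < t₀ → CauchySeq (fun n => u n x t) := by
    intro x t ht
    obtain ⟨L, hL0, hL⟩ := hlipfun x (t - 1) ((t + t₀) / 2) (by linarith)
    rw [Metric.cauchySeq_iff]
    intro ε hε
    have hδpos : 0 < min (min 1 ((t₀ - t) / 2)) (ε / (3 * (L + 1))) := by
      apply lt_min (lt_min one_pos (by linarith)) (by positivity)
    obtain ⟨σ, hσD, hσt₀, hσnear⟩ := hD x t ht _ hδpos
    have hσI : σ ∈ Set.Icc (t - 1) ((t + t₀) / 2) := by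
      rw [abs_lt] at hσnear
      have h1 : σ - t < 1 := lt_of_lt_of_le (lt_of_lt_of_le hσnear.2 (min_le_left _ _)) (min_le_left _ _)
      have h2 : σ - t < (t₀ - t) / 2 := lt_of_lt_of_le (lt_of_lt_of_le hσnear.2 (min_le_left _ _)) (min_le_right _ _)
      have h3 : -(min (min 1 ((t₀ - t) / 2)) (ε / (3 * (L + 1)))) < σ - t := hσnear.1
      have h4 : -(1:ℝ) ≤ -(min (min 1 ((t₀ - t) / 2)) (ε / (3 * (L + 1)))) := by
        simp only [neg_le_neg_iff]
        exact le_trans (min_le_left _ _) (min_le_left _ _)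
      constructor <;> linarith
    have htI : t ∈ Set.Icc (t - 1) ((t + t₀) / 2) := ⟨by linarith, by linarith⟩
    obtain ⟨l, hl⟩ := hconv (x, σ) hσD
    obtain ⟨N, hN⟩ := (Metric.cauchySeq_iff.1 hl.cauchySeq) (ε / 3) (by linarith)
    refine ⟨N, fun p hp q hq => ?_⟩
    have hbd : ∀ n, |u n x t - u n x σ| ≤ ε / 3 := by
      intro n
      have := hL n t σ htI hσI
      have habs : |t - σ| ≤ ε / (3 * (L + 1)) := by
        rw [abs_sub_comm]
        exact le_of_lt (lt_of_lt_of_le hσnear (min_le_right _ _))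
      have : |u n x t - u n x σ| ≤ L * (ε / (3 * (L + 1))) :=
        le_trans this (mul_le_mul_of_nonneg_left habs hL0)
      have hle : L * (ε / (3 * (L + 1))) ≤ ε / 3 := by
        rw [mul_div_assoc', div_le_div_iff₀ (by positivity) (by norm_num : (0:ℝ) < 3)]
        nlinarith
      linarith
    have h1 := hbd p
    have h2 := hbd q
    have h3 := hN p hp q hq
    rw [Real.dist_eq] at h3 ⊢
    have : u p x t - u q x t = (u p x t - u p x σ) + (u p x σ - u q x σ) + (u q x σ - u q x t) := by ring
    rw [this]
    calc |(u p x t - u p x σ) + (u p x σ - u q x σ) + (u q x σ - u q x t)|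
        ≤ |(u p x t - u p x σ) + (u p x σ - u q x σ)| + |u q x σ - u q x t| := abs_add_le _ _
      _ ≤ |u p x t - u p x σ| + |u p x σ - u q x σ| + |u q x σ - u q x t| := by
          apply add_le_add_left (abs_add_le _ _)
      _ < ε := by
          rw [abs_sub_comm] at h2
          have h3' : |u p x σ - u q x σ| < ε / 3 := h3
          linarith
  -- the limit function
  set w : V → ℝ → ℝ := fun x t => limUnder atTop (fun n => u n x t) with hw
  have htend : ∀ (x : V) (t : ℝ), t < t₀ →
      Tendsto (fun n => u n x t) atTop (nhds (w x t)) :=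
    fun x t ht => (hcauchy x t ht).tendsto_limUnder
  have hnonneg : ∀ (x : V) (t : ℝ), t < t₀ → 0 ≤ w x t := by
    intro x t ht
    exact ge_of_tendsto (htend x t ht) (Filter.Eventually.of_forall fun n => (hu n x t ht).2)
  -- Lipschitz bounds pass to the limit
  have hlipw : ∀ (x : V) (a b : ℝ), b < t₀ → ∃ L : ℝ, 0 ≤ L ∧
      ∀ τ τ', τ ∈ Set.Icc a b → τ' ∈ Set.Icc a b → |w x τ - w x τ'| ≤ L * |τ - τ'| := by
    intro x a b hb
    obtain ⟨L, hL0, hL⟩ := hlipfun x a b hb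
    refine ⟨L, hL0, fun τ τ' hτ hτ' => ?_⟩
    have h1 : Tendsto (fun n => |u n x τ - u n x τ'|) atTop (nhds (|w x τ - w x τ'|)) :=
      ((htend x τ (lt_of_le_of_lt hτ.2 hb)).sub (htend x τ' (lt_of_le_of_lt hτ'.2 hb))).abs
    exact le_of_tendsto h1 (Filter.Eventually.of_forall fun n => hL n τ τ' hτ hτ')
  -- continuity of the limit in time
  have hcontw : ∀ (x : V) (t : ℝ), t < t₀ → ContinuousAt (w x) t := by
    intro x t ht
    obtain ⟨L, hL0, hL⟩ := hlipw x (t - 1) ((t + t₀) / 2) (by linarith)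
    have hlipOn : LipschitzOnWith (Real.toNNReal L) (w x) (Set.Icc (t - 1) ((t + t₀) / 2)) := by
      apply LipschitzOnWith.of_dist_le_mul
      intro τ hτ τ' hτ'
      rw [Real.dist_eq, Real.dist_eq, Real.coe_toNNReal L hL0]
      exact hL τ τ' hτ hτ'
    exact hlipOn.continuousOn.continuousAt (Icc_mem_nhds (by linarith) (by linarith))
  -- continuity of the limit Laplacian in time
  have hgcont : ∀ (x : V) (t : ℝ), t < t₀ →
      ContinuousAt (fun τ => lap G wt m (fun y => w y τ) x) t := by
    intro x t ht
    unfold lap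
    exact tendsto_finset_sum _ fun y _ =>
      (continuousAt_const.mul ((hcontw y t ht).sub (hcontw x t ht)))

  -- continuity of the approximants' Laplacians
  have hgcontn : ∀ n (x : V) (τ : ℝ), τ < t₀ →
      ContinuousAt (fun σ => lap G wt m (fun y => u n y σ) x) τ := by
    intro n x τ hτ
    unfold lap
    exact tendsto_finset_sum _ fun y _ =>
      (continuousAt_const.mul (((hu n y τ hτ).1.continuousAt).sub ((hu n x τ hτ).1.continuousAt)))
  -- integral identity for the limit
  have hident : ∀ (x : V) (t₁ t₂ : ℝ), t₁ < t₀ → t₂ < t₀ →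
      w x t₂ - w x t₁ = ∫ τ in t₁..t₂, lap G wt m (fun y => w y τ) x := by
    intro x t₁ t₂ h1 h2
    have hmaxlt : max t₁ t₂ < t₀ := max_lt h1 h2
    have hmemlt : ∀ τ ∈ Set.uIcc t₁ t₂, τ < t₀ := fun τ hτ =>
      lt_of_le_of_lt (le_trans hτ.2 (le_refl _)) hmaxlt
    have hcontn : ∀ n, ContinuousOn (fun τ => lap G wt m (fun y => u n y τ) x)
        (Set.uIcc t₁ t₂) := fun n τ hτ => (hgcontn n x τ (hmemlt τ hτ)).continuousWithinAt
    have hint : ∀ n, IntervalIntegrable (fun τ => lap G wt m (fun y => u n y τ) x)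
        MeasureTheory.volume t₁ t₂ := fun n => (hcontn n).intervalIntegrable
    have hidn : ∀ n, u n x t₂ - u n x t₁ = ∫ τ in t₁..t₂, lap G wt m (fun y => u n y τ) x :=
      fun n => (intervalIntegral.integral_eq_sub_of_hasDerivAt
        (fun τ hτ => (hu n x τ (hmemlt τ hτ)).1) (hint n)).symm
    obtain ⟨L, hL0, hL⟩ := hlip x (min t₁ t₂) (max t₁ t₂) hmaxlt
    have hIoc : Set.uIoc t₁ t₂ ⊆ Set.uIcc t₁ t₂ := Set.Ioc_subset_Icc_self
    have hTint : Tendsto (fun n => ∫ τ in t₁..t₂, lap G wt m (fun y => u n y τ) x) atTop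
        (nhds (∫ τ in t₁..t₂, lap G wt m (fun y => w y τ) x)) := by
      apply intervalIntegral.tendsto_integral_filter_of_dominated_convergence (fun _ => L)
      · exact Filter.Eventually.of_forall fun n =>
          ((hcontn n).mono hIoc).aestronglyMeasurable measurableSet_uIoc
      · refine Filter.Eventually.of_forall fun n => Filter.Eventually.of_forall fun τ hτ => ?_
        have hτ' := hIoc hτ
        simpa [Real.norm_eq_abs] using hL n τ hτ'.1 hτ'.2
      · exact intervalIntegrable_const
      · refine Filter.Eventually.of_forall fun τ hτ => ?_
        have hτt₀ : τ < t₀ := hmemlt τ (hIoc hτ)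
        unfold lap
        exact tendsto_finset_sum _ fun y _ =>
          ((htend y τ hτt₀).sub (htend x τ hτt₀)).const_mul _
    have hTlhs : Tendsto (fun n => u n x t₂ - u n x t₁) atTop (nhds (w x t₂ - w x t₁)) :=
      (htend x t₂ h2).sub (htend x t₁ h1)
    have : Tendsto (fun n => u n x t₂ - u n x t₁) atTop
        (nhds (∫ τ in t₁..t₂, lap G wt m (fun y => w y τ) x)) := by
      simpa only [← hidn] using hTint
    exact tendsto_nhds_unique hTlhs this
  -- the limit is an ancient solution
  refine ⟨w, ?_, fun x t ht => htend x t ht⟩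
  intro x t ht
  refine ⟨?_, hnonneg x t ht⟩
  set a := t - 1 with ha
  set b := (t + t₀) / 2 with hb
  have hab : a < t := by rw [ha]; linarith
  have htb : t < b := by rw [hb]; linarith
  have hbt₀ : b < t₀ := by rw [hb]; linarith
  set g : ℝ → ℝ := fun τ => lap G wt m (fun y => w y τ) x with hg
  have hgc : ∀ τ ∈ Set.Ioo a b, ContinuousAt g τ :=
    fun τ hτ => hgcont x τ (lt_trans hτ.2 hbt₀)
  have hgint : IntervalIntegrable g MeasureTheory.volume a t := by
    apply ContinuousOn.intervalIntegrable
    intro τ hτ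
    have hτab : τ ∈ Set.Ioo (a - 1) b := by
      rcases hτ with ⟨hτ1, hτ2⟩
      rw [min_eq_left hab.le] at hτ1
      rw [max_eq_right hab.le] at hτ2
      exact ⟨by linarith, by linarith⟩
    exact (hgcont x τ (lt_trans hτab.2 hbt₀)).continuousWithinAt
  have hmeas : StronglyMeasurableAtFilter g (nhds t) := by
    refine ⟨Set.Ioo a b, Ioo_mem_nhds hab htb, ?_⟩
    exact (continuousOn_of_forall_continuousAt (fun τ hτ => hgc τ hτ)).aestronglyMeasurable
      measurableSet_Ioo
  have hF : HasDerivAt (fun τ => ∫ s in a..τ, g s) (g t) t :=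
    intervalIntegral.integral_hasDerivAt_right hgint hmeas (hgcont x t ht)
  have hFc : HasDerivAt (fun τ => w x a + ∫ s in a..τ, g s) (g t) t := hF.const_add _
  have heq : (w x) =ᶠ[nhds t] (fun τ => w x a + ∫ s in a..τ, g s) := by
    filter_upwards [Ioo_mem_nhds hab htb] with τ hτ
    have := hident x a τ (by linarith) (lt_trans hτ.2 hbt₀)
    linarith
  exact (hFc.congr_of_eventuallyEq heq)
end
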